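/- arXiv:1802.08678 — 2 statements merged into one kernel-verified Lean document; each statement's English description precedes it below -/
import Mathlib

section
/- Let β ≥ 0 and let m_1,…,m_q, σ_1,…,σ_q : W → ℝ with σ_i(w) ≥ 0 and |μ_i(w) − m_i(w)| ≤ β·σ_i(w) for every w ∈ W and every i ∈ {1,…,q}. Suppose w_n ∈ W minimizes the acquisition function w ↦ T(m_1(w) − β·σ_1(w),…, m_q(w) − β·σ_q(w)) over W. Then the instantaneous regret is bounded: for every w ∈ W, φ(w_n) − φ(w) ≤ 2β · max_{i ∈ {1,…,q}} σ_i(w_n). -/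
/-- A parse tree over `q` leaves: each leaf is an index `i : Fin q`, and each
internal node combines two subtrees with binary `min` or `max` on `ℝ`. -/
inductive ParseTree (q : ℕ) where
  | leaf : Fin q → ParseTree q
  | min : ParseTree q → ParseTree q → ParseTree q
  | max : ParseTree q → ParseTree q → ParseTree q

/-- Evaluation of a parse tree: substitute `a i` for leaf `i` and evaluate the
`min`/`max` operations. -/
def ParseTree.eval {q : ℕ} (a : Fin q → ℝ) : ParseTree q → ℝ
  | .leaf i => a i
  | .min t₁ t₂ => Min.min (t₁.eval a) (t₂.eval a)
  | .max t₁ t₂ => Max.max (t₁.eval a) (t₂.eval a)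

lemma ParseTree.eval_mono {q : ℕ} {a b : Fin q → ℝ} (h : ∀ i, a i ≤ b i) :
    ∀ t : ParseTree q, t.eval a ≤ t.eval b
  | .leaf i => h i
  | .min t₁ t₂ => min_le_min (eval_mono h t₁) (eval_mono h t₂)
  | .max t₁ t₂ => max_le_max (eval_mono h t₁) (eval_mono h t₂)

lemma ParseTree.eval_add_const {q : ℕ} (a : Fin q → ℝ) (c : ℝ) :
    ∀ t : ParseTree q, t.eval (fun i => a i + c) = t.eval a + c
  | .leaf i => rfl
  | .min t₁ t₂ => by
      simp only [ParseTree.eval, eval_add_const a c t₁, eval_add_const a c t₂,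
        min_add_add_right]
  | .max t₁ t₂ => by
      simp only [ParseTree.eval, eval_add_const a c t₁, eval_add_const a c t₂,
        max_add_add_right]

/-- Regret bound: if `|μ i w − m i w| ≤ β σ i w` with `σ i w ≥ 0` and `β ≥ 0`, and
`w_n` minimizes the acquisition function `w ↦ T(m₁(w) − βσ₁(w),…,m_q(w) − βσ_q(w))`,
then for every `w`, `φ(w_n) − φ(w) ≤ 2β max_i σ_i(w_n)`, where
`φ(w) = T(μ₁(w),…,μ_q(w))`. -/
theorem parseTree_regret_bound {q : ℕ} (hq : 0 < q) {W : Type*} [Nonempty W]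
    (T : ParseTree q) (μ m σ : Fin q → W → ℝ) (β : ℝ) (hβ : 0 ≤ β) (wn : W)
    (hσ : ∀ w, ∀ i, 0 ≤ σ i w)
    (hconf : ∀ w, ∀ i, |μ i w - m i w| ≤ β * σ i w)
    (hmin : ∀ w, T.eval (fun i => m i wn - β * σ i wn) ≤
      T.eval (fun i => m i w - β * σ i w)) :
    ∀ w, T.eval (fun i => μ i wn) - T.eval (fun i => μ i w) ≤
      2 * β * Finset.univ.sup'
        (Finset.univ_nonempty_iff.mpr (Fin.pos_iff_nonempty.mp hq))
        (fun i => σ i wn) := by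
  intro w
  set S := Finset.univ.sup'
      (Finset.univ_nonempty_iff.mpr (Fin.pos_iff_nonempty.mp hq))
      (fun i => σ i wn) with hSdef
  have hS : ∀ i, σ i wn ≤ S := fun i => hSdef ▸ Finset.le_sup' (fun j => σ j wn) (Finset.mem_univ i)
  have h1 : T.eval (fun i => μ i wn) ≤
      T.eval (fun i => (m i wn - β * σ i wn) + 2 * β * S) := by
    apply ParseTree.eval_mono
    intro i
    have := abs_le.mp (hconf wn i)
    have hb : β * σ i wn ≤ β * S := mul_le_mul_of_nonneg_left (hS i) hβ
    nlinarith [this.1, this.2]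
  have h2 : T.eval (fun i => (m i wn - β * σ i wn) + 2 * β * S) =
      T.eval (fun i => m i wn - β * σ i wn) + 2 * β * S :=
    ParseTree.eval_add_const _ _ T
  have h3 : T.eval (fun i => m i w - β * σ i w) ≤ T.eval (fun i => μ i w) := by
    apply ParseTree.eval_mono
    intro i
    have := abs_le.mp (hconf w i)
    linarith [this.1]
  have := hmin w
  linarith
end

section
/- Exactness of the quantitative semantics away from the boundary: for every specification formula ψ over predicates on Ξ and every trajectory ξ ∈ Ξ such that μ(ξ) ≠ 0 for every predicate μ occurring in ψ, one has Q(ψ)(ξ) ≠ 0, and Q(ψ)(ξ) > 0 if and only if ξ satisfies ψ under the boolean semantics. -/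
/-- Specification formulas over trajectories `Ξ`: predicates, negated predicates,
conjunction, and disjunction (negation only applies to predicates). -/
inductive Formula (Xi : Type*) where
  | pred : (Xi → ℝ) → Formula Xi
  | npred : (Xi → ℝ) → Formula Xi
  | and : Formula Xi → Formula Xi → Formula Xi
  | or : Formula Xi → Formula Xi → Formula Xi

/-- Boolean semantics: `ξ` satisfies `μ` iff `μ ξ > 0`, satisfies `¬μ` iff not
`μ ξ > 0`; `∧`/`∨` are conjunction/disjunction. -/
def Formula.Sat {Xi : Type*} (ξ : Xi) : Formula Xi → Prop
  | .pred μ => μ ξ > 0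
  | .npred μ => ¬ (μ ξ > 0)
  | .and ψ ψ' => ψ.Sat ξ ∧ ψ'.Sat ξ
  | .or ψ ψ' => ψ.Sat ξ ∨ ψ'.Sat ξ

/-- Quantitative semantics: `Q(μ) = μ`, `Q(¬μ) = −μ`, `Q(ψ ∧ ψ') = min`,
`Q(ψ ∨ ψ') = max`. -/
def Formula.quant {Xi : Type*} (ξ : Xi) : Formula Xi → ℝ
  | .pred μ => μ ξ
  | .npred μ => -μ ξ
  | .and ψ ψ' => min (ψ.quant ξ) (ψ'.quant ξ)
  | .or ψ ψ' => max (ψ.quant ξ) (ψ'.quant ξ)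

/-- `ψ.AllPreds P` holds iff every predicate `μ` occurring in `ψ` satisfies `P μ`. -/
def Formula.AllPreds {Xi : Type*} (P : (Xi → ℝ) → Prop) : Formula Xi → Prop
  | .pred μ => P μ
  | .npred μ => P μ
  | .and ψ ψ' => ψ.AllPreds P ∧ ψ'.AllPreds P
  | .or ψ ψ' => ψ.AllPreds P ∧ ψ'.AllPreds P

/-- Exactness away from the boundary: if `μ ξ ≠ 0` for every predicate `μ`
occurring in `ψ`, then `Q(ψ)(ξ) ≠ 0`, and `Q(ψ)(ξ) > 0` iff `ξ` satisfies `ψ`. -/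
theorem quant_exact_of_ne_zero {Xi : Type*} (ψ : Formula Xi) (ξ : Xi)
    (h : ψ.AllPreds (fun μ => μ ξ ≠ 0)) :
    ψ.quant ξ ≠ 0 ∧ (0 < ψ.quant ξ ↔ ψ.Sat ξ) := by
  induction ψ with
  | pred μ =>
      exact ⟨h, by simp [Formula.quant, Formula.Sat]⟩
  | npred μ =>
      refine ⟨neg_ne_zero.mpr h, ?_⟩
      simp only [Formula.quant, Formula.Sat, not_lt]
      constructor
      · intro hq; linarith
      · intro hq; rcases lt_or_eq_of_le hq with h'|h' <;> [linarith; exact absurd h' h]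
  | and ψ ψ' ih ih' =>
      obtain ⟨h1, h2⟩ := h
      obtain ⟨n1, i1⟩ := ih h1
      obtain ⟨n2, i2⟩ := ih' h2
      refine ⟨?_, ?_⟩
      · simp only [Formula.quant]
        rcases min_cases (ψ.quant ξ) (ψ'.quant ξ) with ⟨e,_⟩|⟨e,_⟩ <;> rw [e] <;> assumption
      · simp only [Formula.quant, Formula.Sat, lt_min_iff, i1, i2]
  | or ψ ψ' ih ih' =>
      obtain ⟨h1, h2⟩ := h
      obtain ⟨n1, i1⟩ := ih h1
      obtain ⟨n2, i2⟩ := ih' h2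
      refine ⟨?_, ?_⟩
      · simp only [Formula.quant]
        rcases max_cases (ψ.quant ξ) (ψ'.quant ξ) with ⟨e,_⟩|⟨e,_⟩ <;> rw [e] <;> assumption
      · simp only [Formula.quant, Formula.Sat, lt_max_iff, i1, i2]
end
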